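/- arXiv:1303.6259 — 4 statements merged into one kernel-verified Lean document; each statement's English description precedes it below -/
import Mathlib

section
/- Let F be a p-adic field of odd residual characteristic and let c̃ be a 2-cocycle on GSp_{2n}(F) valued in {±1} whose restriction to diagonal matrices satisfies c̃([t,y],[t',y']) = (det t, y' det t')_F, where [t,y] = diag(t, y t^{-1}) for t ∈ GL_n(F) diagonal and y ∈ F^*. Then the center of the double cover T̃' of the diagonal torus T'(F) of GSp_{2n}(F) defined by this cocycle is {([t,y], ε) : y ∈ (F^*)^2 and det t ∈ (F^*)^2}. -/
/-!
Writing `a = det t`, the element `([t,y], ε)` commutes with `([t',y'], ε')` exactly when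
`(a, y' a')_F = (a', y a)_F`. For `n > 0` the pair `(a', y')` ranges over all of `F^* × F^*`;
taking `a' = 1` forces `(a, ·)_F` to be trivial, and then the remaining condition says that
`(y, ·)_F` is trivial. Non-degeneracy of the Hilbert symbol turns both conditions into squares.
-/

/-- Multiplication on the double cover `T̃'` of the diagonal torus
`T'(F) = {[t,y] = diag(t, y t⁻¹)}` of `GSp_{2n}(F)`, given by the cocycle
`c̃([t,y],[t',y']) = (det t, y' det t')_F`.  An element is a triple `(t, y, ε)`. -/
noncomputable def torusCovMul {F : Type*} [Field F] {n : ℕ} (hilb : Fˣ → Fˣ → ℤˣ)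
    (p q : (Fin n → Fˣ) × Fˣ × ℤˣ) : (Fin n → Fˣ) × Fˣ × ℤˣ :=
  (p.1 * q.1, p.2.1 * q.2.1,
    p.2.2 * q.2.2 * hilb (∏ i, p.1 i) (q.2.1 * ∏ i, q.1 i))

theorem torusCovMul_comm_iff {F : Type*} [Field F] {n : ℕ} (hilb : Fˣ → Fˣ → ℤˣ)
    (p q : (Fin n → Fˣ) × Fˣ × ℤˣ) :
    torusCovMul hilb p q = torusCovMul hilb q p ↔
      hilb (∏ i, p.1 i) (q.2.1 * ∏ i, q.1 i) = hilb (∏ i, q.1 i) (p.2.1 * ∏ i, p.1 i) := by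
  simp only [torusCovMul, Prod.ext_iff, mul_comm p.1, mul_comm p.2.1, mul_comm p.2.2,
    mul_right_inj, true_and]

theorem forall_prod_fst_iff {ι M E : Type*} [Fintype ι] [Nonempty ι] [CommMonoid M]
    [Nonempty E] (P : M → M → Prop) :
    (∀ q : (ι → M) × M × E, P (∏ i, q.1 i) q.2.1) ↔ ∀ b z : M, P b z := by
  classical
  refine ⟨fun h b z => ?_, fun h q => h _ _⟩
  obtain ⟨i⟩ := ‹Nonempty ι›
  obtain ⟨e⟩ := ‹Nonempty E›
  simpa only [Fintype.prod_pi_mulSingle'] using h (Pi.mulSingle i b, z, e)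

section Pairing

variable {M G : Type*} [CommMonoid M] [CommGroup G] {β : M → M → G}

theorem pairing_one_right (hmul : ∀ a b c, β a (b * c) = β a b * β a c) (a : M) :
    β a 1 = 1 := by
  simpa only [mul_one, left_eq_mul] using hmul a 1 1

/-- The centrality condition for `torusCovMul`, with `b = det t'` and `z = y'`. -/
theorem forall_pairing_eq_iff (hsymm : ∀ a b, β a b = β b a)
    (hmul : ∀ a b c, β a (b * c) = β a b * β a c) (a y : M) :
    (∀ b z, β a (z * b) = β b (y * a)) ↔ (∀ b, β a b = 1) ∧ (∀ b, β y b = 1) := by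
  constructor
  · intro h
    have ha : ∀ b, β a b = 1 := fun z => by
      rw [← mul_one z, h, hsymm, pairing_one_right hmul]
    refine ⟨ha, fun b => ?_⟩
    have hb := h b 1
    rwa [one_mul, ha, hmul, hsymm b a, ha, mul_one, hsymm, eq_comm] at hb
  · rintro ⟨ha, hy⟩ b z
    rw [hmul, hmul, ha, ha, hsymm b, hsymm b, ha, hy]

end Pairing

theorem stmt_12_general (F : Type*) [Field F] (n : ℕ) (hn : 0 < n)
    (hilb : Fˣ → Fˣ → ℤˣ)
    (hsymm : ∀ a b, hilb a b = hilb b a)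
    (hmul2 : ∀ a b c, hilb a (b * c) = hilb a b * hilb a c)
    (hnd : ∀ a, (∀ b, hilb a b = 1) ↔ IsSquare a) :
    {p : (Fin n → Fˣ) × Fˣ × ℤˣ |
        ∀ q, torusCovMul hilb p q = torusCovMul hilb q p}
      = {p : (Fin n → Fˣ) × Fˣ × ℤˣ | IsSquare p.2.1 ∧ IsSquare (∏ i, p.1 i)} := by
  have := Fin.pos_iff_nonempty.mp hn
  ext ⟨t, y, ε⟩
  simp only [Set.mem_ofPred_eq, torusCovMul_comm_iff]
  rw [forall_prod_fst_iff (fun b z => hilb (∏ i, t i) (z * b) = hilb b (y * ∏ i, t i)),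
    forall_pairing_eq_iff hsymm hmul2, hnd, hnd, and_comm]

/-- The center of the double cover `T̃'` of the diagonal torus of `GSp_{2n}(F)` is
`{([t,y], ε) : y ∈ (F^*)² and det t ∈ (F^*)²}`. -/
theorem stmt_12 (F : Type*) [Field F] (n : ℕ) (hn : 0 < n)
    (hilb : Fˣ → Fˣ → ℤˣ)
    (hsymm : ∀ a b, hilb a b = hilb b a)
    (hmul1 : ∀ a b c, hilb (a * b) c = hilb a c * hilb b c)
    (hmul2 : ∀ a b c, hilb a (b * c) = hilb a b * hilb a c)
    (hnd : ∀ a, (∀ b, hilb a b = 1) ↔ IsSquare a) :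
    {p : (Fin n → Fˣ) × Fˣ × ℤˣ |
        ∀ q, torusCovMul hilb p q = torusCovMul hilb q p}
      = {p : (Fin n → Fˣ) × Fˣ × ℤˣ | IsSquare p.2.1 ∧ IsSquare (∏ i, p.1 i)} :=
  stmt_12_general F n hn hilb hsymm hmul2 hnd
end

section
/- With the double cover of the diagonal torus T'(F) of GSp_{2n}(F) defined by the cocycle c̃([t,y],[t',y']) = (det t, y' det t')_F: the inverse image T̃ of the torus of Sp_{2n}(F) (i.e. of the elements [t,1]) is abelian, the inverse image T̃'^+ of T'^+(F) = {[t,y] : y ∈ (F^*)^2} equals the centralizer of T̃ in T̃', and T̃'^+ is a maximal abelian subgroup of T̃'. -/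
section aux

variable {F : Type*} [Field F] (hilb : Fˣ → Fˣ → ℤˣ)

lemma hilb_one_right (hmul2 : ∀ a b c, hilb a (b * c) = hilb a b * hilb a c)
    (a : Fˣ) : hilb a 1 = 1 := by
  have h := hmul2 a 1 1
  rw [one_mul] at h
  exact (left_eq_mul.mp h)

lemma commute_iff {n : ℕ}
    (hsymm : ∀ a b, hilb a b = hilb b a)
    (hmul2 : ∀ a b c, hilb a (b * c) = hilb a b * hilb a c)
    (p q : (Fin n → Fˣ) × Fˣ × ℤˣ) :
    torusCovMul hilb p q = torusCovMul hilb q p ↔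
      hilb (∏ i, p.1 i) q.2.1 = hilb (∏ i, q.1 i) p.2.1 := by
  unfold torusCovMul
  rw [Prod.ext_iff, Prod.ext_iff]
  simp only [mul_comm p.1 q.1, mul_comm p.2.1 q.2.1, true_and]
  rw [hmul2, hmul2, hsymm (∏ i, q.1 i) (∏ i, p.1 i)]
  rw [mul_comm q.2.2 p.2.2]
  constructor
  · intro h
    exact mul_right_cancel (mul_left_cancel h)
  · intro h
    rw [h]

end aux

/-- In the double cover `T̃'` of the diagonal torus of `GSp_{2n}(F)`:
the inverse image `T̃` of `{[t,1]}` is abelian; the inverse image `T̃'⁺` of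
`{[t,y] : y ∈ (F^*)²}` equals the centralizer of `T̃` in `T̃'`; and `T̃'⁺` is a
maximal abelian subgroup of `T̃'`. -/
theorem stmt_13 (F : Type*) [Field F] (n : ℕ) (hn : 0 < n)
    (hilb : Fˣ → Fˣ → ℤˣ)
    (hsymm : ∀ a b, hilb a b = hilb b a)
    (hmul1 : ∀ a b c, hilb (a * b) c = hilb a c * hilb b c)
    (hmul2 : ∀ a b c, hilb a (b * c) = hilb a b * hilb a c)
    (hnd : ∀ a, (∀ b, hilb a b = 1) ↔ IsSquare a) :
    -- `T̃` is abelian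
    (∀ p q : (Fin n → Fˣ) × Fˣ × ℤˣ, p.2.1 = 1 → q.2.1 = 1 →
        torusCovMul hilb p q = torusCovMul hilb q p) ∧
    -- the centralizer of `T̃` in `T̃'` is `T̃'⁺`
    ({p : (Fin n → Fˣ) × Fˣ × ℤˣ |
        ∀ q, q.2.1 = 1 → torusCovMul hilb p q = torusCovMul hilb q p}
      = {p : (Fin n → Fˣ) × Fˣ × ℤˣ | IsSquare p.2.1}) ∧
    -- `T̃'⁺` is abelian
    (∀ p q : (Fin n → Fˣ) × Fˣ × ℤˣ, IsSquare p.2.1 → IsSquare q.2.1 →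
        torusCovMul hilb p q = torusCovMul hilb q p) ∧
    -- and maximal abelian
    (∀ p : (Fin n → Fˣ) × Fˣ × ℤˣ,
        (∀ q, IsSquare q.2.1 → torusCovMul hilb p q = torusCovMul hilb q p) →
        IsSquare p.2.1) := by
  have hone : ∀ a : Fˣ, hilb a 1 = 1 := hilb_one_right hilb hmul2
  have hsq : ∀ (a b : Fˣ), IsSquare b → hilb a b = 1 := fun a b hb => by
    rw [hsymm]; exact (hnd b).mpr hb a
  -- given any b, there is q in T̃ with ∏ q.1 = b
  have hmk : ∀ b : Fˣ, ∃ q : (Fin n → Fˣ) × Fˣ × ℤˣ,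
      q.2.1 = 1 ∧ (∏ i, q.1 i) = b := by
    intro b
    refine ⟨⟨fun i => if i = ⟨0, hn⟩ then b else 1, 1, 1⟩, rfl, ?_⟩
    simp [Finset.prod_ite_eq']
  have key := commute_iff hilb hsymm hmul2 (n := n)
  refine ⟨?_, ?_, ?_, ?_⟩
  · intro p q hp hq
    rw [key, hp, hq, hone, hone]
  · ext p
    simp only [Set.mem_setOf_eq]
    constructor
    · intro h
      refine (hnd p.2.1).mp fun b => ?_
      obtain ⟨q, hq1, hq2⟩ := hmk b
      have := (key p q).mp (h q hq1)
      rw [hq1, hone, hq2, hsymm] at this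
      exact this.symm
    · intro hp q hq
      rw [key, hq, hone, hsq _ _ hp]
  · intro p q hp hq
    rw [key, hsq _ _ hq, hsq _ _ hp]
  · intro p h
    refine (hnd p.2.1).mp fun b => ?_
    obtain ⟨q, hq1, hq2⟩ := hmk b
    have := (key p q).mp (h q (hq1 ▸ IsSquare.one))
    rw [hq1, hone, hq2, hsymm] at this
    exact this.symm
end

section
/- With the cocycle c̃ on GSp_{2n}(F) satisfying c̃(i(F^*), GSp_{2n}(F)) = 1 and (aI_{2n}, ε)^{(g,ε')} = (aI_{2n}, ε·(λ(g), a^n)_F): the center of the double cover of GSp_{2n}(F) is the inverse image of F^* I_{2n} if n is even, and the inverse image of (F^*)^2 I_{2n} if n is odd. -/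
/-- Multiplication on the double cover of `GSp_{2n}(F)` defined by a cocycle `cc`. -/
def gspCovMul {B : Type*} [Group B] (cc : B → B → ℤˣ) (p q : B × ℤˣ) : B × ℤˣ :=
  (p.1 * q.1, p.2 * q.2 * cc p.1 q.1)

/-!
An element `(h, ε)` of the cover commutes with `(g, ε')` exactly when `h` and `g` commute in
`GSp_{2n}(F)` and the cocycle is symmetric on the pair. So central elements lie over the centre
`F^* I_{2n}`, and `(aI, ε)` is central iff `(λ(g), aⁿ)_F = 1` for every `g`; as `λ` is surjective
and the Hilbert symbol is non-degenerate, this says that `aⁿ` is a square, which is automatic for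
even `n` and equivalent to `a` being a square for odd `n`.
-/

lemma Odd.isSquare_pow_iff {G : Type*} [CommGroup G] {n : ℕ} (hn : Odd n) {a : G} :
    IsSquare (a ^ n) ↔ IsSquare a := by
  obtain ⟨m, rfl⟩ := hn
  refine ⟨fun h => ?_, IsSquare.pow _⟩
  rw [pow_succ, two_mul, pow_add] at h
  simpa only [mul_div_cancel_left] using h.div (.mul_self (a ^ m))

lemma Int.units_eq_iff_mul_eq_one {u v : ℤˣ} : u = v ↔ u * v = 1 := by
  rw [mul_eq_one_iff_eq_inv, Int.units_inv_eq_self]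

section Cover

variable {B : Type*} [Group B] (cc : B → B → ℤˣ)

lemma gspCovMul_comm_iff (p q : B × ℤˣ) :
    gspCovMul cc p q = gspCovMul cc q p ↔ p.1 * q.1 = q.1 * p.1 ∧ cc p.1 q.1 = cc q.1 p.1 := by
  simp only [gspCovMul, Prod.mk.injEq, mul_comm p.2 q.2, mul_right_inj]

lemma forall_gspCovMul_comm_iff (p : B × ℤˣ) :
    (∀ q, gspCovMul cc p q = gspCovMul cc q p) ↔
      p.1 ∈ Subgroup.center B ∧ ∀ g, cc p.1 g * cc g p.1 = 1 := by
  simp only [gspCovMul_comm_iff, Subgroup.mem_center_iff, ← Int.units_eq_iff_mul_eq_one]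
  refine ⟨fun h => ⟨fun g => (h (g, 1)).1.symm, fun g => (h (g, 1)).2⟩,
    fun h q => ⟨(h.1 q.1).symm, h.2 q.1⟩⟩

end Cover

theorem stmt_14_general (F : Type*) [Field F] (B : Type*) [Group B] (n : ℕ)
    (hilb : Fˣ → Fˣ → ℤˣ)
    (hnd : ∀ a, (∀ b, hilb b a = 1) ↔ IsSquare a)
    (lam : B →* Fˣ) (hlam : Function.Surjective lam)
    (z : Fˣ →* B) (hz : Subgroup.center B = z.range)
    (cc : B → B → ℤˣ)
    (hconj : ∀ (a : Fˣ) (g : B), cc (z a) g * cc g (z a) = hilb (lam g) (a ^ n)) :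
    (Even n →
      {p : B × ℤˣ | ∀ q, gspCovMul cc p q = gspCovMul cc q p}
        = {p : B × ℤˣ | ∃ a : Fˣ, p.1 = z a}) ∧
    (Odd n →
      {p : B × ℤˣ | ∀ q, gspCovMul cc p q = gspCovMul cc q p}
        = {p : B × ℤˣ | ∃ a : Fˣ, p.1 = z a ∧ IsSquare a}) := by
  have center_eq : {p : B × ℤˣ | ∀ q, gspCovMul cc p q = gspCovMul cc q p}
      = {p : B × ℤˣ | ∃ a : Fˣ, p.1 = z a ∧ IsSquare (a ^ n)} := by
    ext ⟨h, ε⟩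
    simp only [Set.mem_ofPred_eq, forall_gspCovMul_comm_iff, hz, MonoidHom.mem_range]
    constructor
    · rintro ⟨⟨a, rfl⟩, hsym⟩
      refine ⟨a, rfl, (hnd _).1 fun b => ?_⟩
      obtain ⟨g, rfl⟩ := hlam b
      rw [← hconj, hsym]
    · rintro ⟨a, rfl, hsq⟩
      exact ⟨⟨a, rfl⟩, fun g => by rw [hconj, (hnd _).2 hsq]⟩
  refine ⟨fun hn => ?_, fun hn => ?_⟩ <;> rw [center_eq] <;> ext p
  · exact ⟨fun ⟨a, ha, _⟩ => ⟨a, ha⟩, fun ⟨a, ha⟩ => ⟨a, ha, hn.isSquare_pow a⟩⟩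
  · simp only [Set.mem_ofPred_eq, hn.isSquare_pow_iff]

/-- The center of the metaplectic double cover of `GSp_{2n}(F)` is the inverse image
of the scalars `F^* I_{2n}` when `n` is even, and of `(F^*)² I_{2n}` when `n` is odd.
Here `B` plays the role of `GSp_{2n}(F)`, `lam` is the similitude character,
`z : Fˣ →* B` the embedding of the scalar matrices (whose range is the center of `B`),
and `cc` the 2-cocycle, satisfying the commutation rule
`cc(aI, g) · cc(g, aI) = (λ(g), aⁿ)_F`. -/
theorem stmt_14 (F : Type*) [Field F] (B : Type*) [Group B] (n : ℕ)
    (hilb : Fˣ → Fˣ → ℤˣ)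
    (hmul2 : ∀ a b c, hilb a (b * c) = hilb a b * hilb a c)
    (hnd : ∀ a, (∀ b, hilb b a = 1) ↔ IsSquare a)
    (lam : B →* Fˣ) (hlam : Function.Surjective lam)
    (z : Fˣ →* B) (hz : Subgroup.center B = z.range)
    (cc : B → B → ℤˣ)
    (hconj : ∀ (a : Fˣ) (g : B), cc (z a) g * cc g (z a) = hilb (lam g) (a ^ n)) :
    (Even n →
      {p : B × ℤˣ | ∀ q, gspCovMul cc p q = gspCovMul cc q p}
        = {p : B × ℤˣ | ∃ a : Fˣ, p.1 = z a}) ∧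
    (Odd n →
      {p : B × ℤˣ | ∀ q, gspCovMul cc p q = gspCovMul cc q p}
        = {p : B × ℤˣ | ∃ a : Fˣ, p.1 = z a ∧ IsSquare a}) :=
  stmt_14_general F B n hilb hnd lam hlam z hz cc hconj
end

section
/- With the two splittings ι^η of the metaplectic cover over K = GSp_{2n}(O) (indexed by the two quadratic characters η of O^*): if n is odd, the two images of K inside the metaplectic group are conjugate (indeed by (πI_{2n},1), since (k,ε)^{(πI_{2n},1)} = (k, ε(λ(k),π)_F) and (λ(k),π^n)_F = η_π(λ(k)) for n odd); if n is even, they are not conjugate. -/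
/-!
For `n` odd, a lift of `πI_{2n}` conjugates `s₁` into `s₂`, because `(λ(k), πⁿ)_F = (λ(k), π)_F`.
For `n` even, an element conjugating `s₁` into `s₂` lies over the normalizer of `K`, hence
(Cartan) over `aI_{2n}·k₀`; the lift of `aI_{2n}` acts trivially since `(λ(k), aⁿ)_F = 1`, and
conjugating by `s₁ k₀` keeps us inside the image of `s₁`. So the two splittings would agree.
-/

section Sections

variable {G B : Type*} [Group G] [Group B] {K : Subgroup B} (p : G →* B) {s t : K →* G}

lemma normalizes_of_conj_sections (hs : ∀ k, p (s k) = k) (ht : ∀ k, p (t k) = k) {g : G}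
    (hg : ∀ k, g⁻¹ * s k * g = t k) : ∀ k ∈ K, (p g)⁻¹ * k * p g ∈ K := by
  intro k hk
  have hproj := congrArg p (hg ⟨k, hk⟩)
  rw [map_mul, map_mul, map_inv, hs, ht] at hproj
  rw [hproj]
  exact hk

lemma sections_eq_of_conj_centralizing_mul (hs : ∀ k, p (s k) = k) (ht : ∀ k, p (t k) = k)
    {g₀ : G} {k₀ : K} (hcent : ∀ k, g₀⁻¹ * s k * g₀ = s k)
    (hg : ∀ k, (g₀ * s k₀)⁻¹ * s k * (g₀ * s k₀) = t k) : s = t := by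
  have hconj : ∀ k, t k = s (k₀⁻¹ * k * k₀) := fun k => by
    rw [map_mul, map_mul, map_inv, ← hcent k, ← hg k]
    group
  have hfix : ∀ k, k₀⁻¹ * k * k₀ = k := fun k =>
    Subtype.ext (by simpa only [hs, ht] using (congrArg p (hconj k)).symm)
  ext k
  rw [hconj, hfix]

end Sections

lemma Int.units_pow_of_odd (u : ℤˣ) {n : ℕ} (hn : Odd n) : u ^ n = u := by
  rw [Int.units_pow_eq_pow_mod_two, Nat.odd_iff.mp hn, pow_one]

lemma Int.units_pow_of_even (u : ℤˣ) {n : ℕ} (hn : Even n) : u ^ n = 1 := by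
  rw [Int.units_pow_eq_pow_mod_two, Nat.even_iff.mp hn, pow_zero]

theorem stmt_16_general (F : Type*) [Field F] (B : Type*) [Group B] (n : ℕ)
    (hilb : Fˣ → Fˣ → ℤˣ)
    (hmul2 : ∀ a b c, hilb a (b * c) = hilb a b * hilb a c)
    (lam : B →* Fˣ) (π : Fˣ)
    (zscal : Fˣ →* B)
    (Gt : Type*) [Group Gt] (pr : Gt →* B) (hpr : Function.Surjective pr)
    (z : Gt)
    (K : Subgroup B)
    -- Cartan: the normalizer of `K` is `Z(B)·K`
    (hnorm : ∀ b : B, (∀ k ∈ K, b⁻¹ * k * b ∈ K) →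
      ∃ a : Fˣ, ∃ k₀ ∈ K, b = zscal a * k₀)
    -- conjugation by a lift of a central element `aI_{2n}`
    (hconj : ∀ (g : Gt) (a : Fˣ), pr g = zscal a → ∀ x : Gt,
      g⁻¹ * x * g = if hilb (lam (pr x)) (a ^ n) = 1 then x else x * z)
    -- the two splittings over `K`
    (s₁ s₂ : ↥K →* Gt)
    (hs₁ : ∀ k : ↥K, pr (s₁ k) = (k : B)) (hs₂ : ∀ k : ↥K, pr (s₂ k) = (k : B))
    (hrel : ∀ k : ↥K,
      s₂ k = if hilb (lam (k : B)) π = 1 then s₁ k else s₁ k * z)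
    (hne : s₁ ≠ s₂) :
    (Odd n → ∃ g : Gt, ∀ k : ↥K, g⁻¹ * s₁ k * g = s₂ k) ∧
    (Even n → ¬ ∃ g : Gt, ∀ k : ↥K, g⁻¹ * s₁ k * g = s₂ k) := by
  have hilb_pow : ∀ b a : Fˣ, ∀ m : ℕ, hilb b (a ^ m) = hilb b a ^ m :=
    fun b => map_pow (MonoidHom.mk' (hilb b) (hmul2 b))
  refine ⟨fun hn => ?_, fun hn ⟨g, hg⟩ => hne ?_⟩
  · obtain ⟨g, hg⟩ := hpr (zscal π)
    exact ⟨g, fun k => by rw [hconj g π hg, hs₁, hilb_pow, Int.units_pow_of_odd _ hn, hrel]⟩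
  · obtain ⟨a, k₀, hk₀, hpg⟩ := hnorm (pr g) (normalizes_of_conj_sections pr hs₁ hs₂ hg)
    refine sections_eq_of_conj_centralizing_mul pr hs₁ hs₂ (g₀ := g * (s₁ ⟨k₀, hk₀⟩)⁻¹)
      (k₀ := ⟨k₀, hk₀⟩) (fun k => ?_) (by simpa only [inv_mul_cancel_right] using hg)
    rw [hconj _ a (by simp [hpg, hs₁]), hilb_pow, Int.units_pow_of_even _ hn, if_pos rfl]

/-- The two splittings of the metaplectic cover over `K = GSp_{2n}(O)` are conjugate
in the cover if and only if `n` is odd.  Here `B = GSp_{2n}(F)` with similitude `lam`,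
`zscal : Fˣ →* B` the central scalar matrices `a ↦ aI_{2n}`, `Gt` the metaplectic
double cover with projection `pr` and central kernel `{1, z}`, conjugation by a lift of
`aI_{2n}` acting by `x ↦ x · z^{[(λ(pr x), aⁿ)_F = -1]}`, normalizer of `K` in `B`
contained in `Z(B)·K` (Cartan), and `s₁, s₂` the two splittings of the cover over `K`,
related by `s₂(k) = s₁(k) z^{[(λ(k),π)_F = -1]}` (`η_π = (·, π)_F`). -/
theorem stmt_16 (F : Type*) [Field F] (B : Type*) [Group B] (n : ℕ)
    (hilb : Fˣ → Fˣ → ℤˣ)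
    (hmul2 : ∀ a b c, hilb a (b * c) = hilb a b * hilb a c)
    (lam : B →* Fˣ) (π : Fˣ)
    (zscal : Fˣ →* B) (hzc : ∀ (a : Fˣ) (b : B), zscal a * b = b * zscal a)
    (Gt : Type*) [Group Gt] (pr : Gt →* B) (hpr : Function.Surjective pr)
    (z : Gt) (hzcen : ∀ x : Gt, z * x = x * z) (hz2 : z * z = 1) (hzne : z ≠ 1)
    (hker : ∀ x : Gt, pr x = 1 ↔ x = 1 ∨ x = z)
    (K : Subgroup B)
    -- Cartan: the normalizer of `K` is `Z(B)·K`
    (hnorm : ∀ b : B, (∀ k ∈ K, b⁻¹ * k * b ∈ K) →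
      ∃ a : Fˣ, ∃ k₀ ∈ K, b = zscal a * k₀)
    -- conjugation by a lift of a central element `aI_{2n}`
    (hconj : ∀ (g : Gt) (a : Fˣ), pr g = zscal a → ∀ x : Gt,
      g⁻¹ * x * g = if hilb (lam (pr x)) (a ^ n) = 1 then x else x * z)
    -- the two splittings over `K`
    (s₁ s₂ : ↥K →* Gt)
    (hs₁ : ∀ k : ↥K, pr (s₁ k) = (k : B)) (hs₂ : ∀ k : ↥K, pr (s₂ k) = (k : B))
    (hrel : ∀ k : ↥K,
      s₂ k = if hilb (lam (k : B)) π = 1 then s₁ k else s₁ k * z)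
    (hne : s₁ ≠ s₂) :
    (Odd n → ∃ g : Gt, ∀ k : ↥K, g⁻¹ * s₁ k * g = s₂ k) ∧
    (Even n → ¬ ∃ g : Gt, ∀ k : ↥K, g⁻¹ * s₁ k * g = s₂ k) :=
  stmt_16_general F B n hilb hmul2 lam π zscal Gt pr hpr z K hnorm hconj s₁ s₂ hs₁ hs₂ hrel hne
end
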